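/- arXiv:0812.5039 — 5 statements merged into one kernel-verified Lean document; each statement's English description precedes it below -/
import Mathlib

section
/- Let d ≥ 1 be an integer, let S ⊆ [0,1]^d be a stair-convex set, and let v be a real number with 0 < v ≤ 1/e (where e = 2.71828… is Euler's number). If every closed axis-parallel box B ⊆ S has Lebesgue measure vol(B) ≤ v, then vol(S) ≤ e · v · (ln(1/v))^{d−1}. -/
/-!
Induct on `d`. For `S ⊆ ℝ^(d+1)`, slice at height `t` in the last coordinate and let `T` be the
supremum of the heights occurring in `S`. The first leg of a stair-path is vertical, so below `T`
the slices increase with `t`, and a box in the slice at height `t` lifts to boxes in `S` of height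
arbitrarily close to `T - t`. Hence the slice at height `t` is a stair-convex set whose boxes have
volume at most `v / (T - t)`, and induction bounds its volume by
`min 1 (e v / (T - t) · log ((T - t) / v) ^ (d - 1))`. Because the slices are monotone, covering
`S` by thin slabs bounds `vol S` by the integral of the slice volumes (no measurability of `S` is
needed), and with `u = T - t` the integral is at most
`e v + e v (log (T / v) ^ d - 1) / d ≤ e v · log (1 / v) ^ d`. In dimension one the same lifting
puts `S` inside an interval of length `v`.
-/

noncomputable def stairPath : (d : ℕ) → (Fin d → ℝ) → (Fin d → ℝ) → Set (Fin d → ℝ)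
  | 0, _, _ => Set.univ
  | (d+1), a, b =>
    if a (Fin.last d) ≤ b (Fin.last d) then
      segment ℝ a (Fin.snoc (Fin.init a) (b (Fin.last d))) ∪
        (fun z => Fin.snoc z (b (Fin.last d))) '' stairPath d (Fin.init a) (Fin.init b)
    else
      segment ℝ b (Fin.snoc (Fin.init b) (a (Fin.last d))) ∪
        (fun z => Fin.snoc z (a (Fin.last d))) '' stairPath d (Fin.init b) (Fin.init a)

def StairConvex {d : ℕ} (S : Set (Fin d → ℝ)) : Prop :=
  ∀ a ∈ S, ∀ b ∈ S, stairPath d a b ⊆ S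

open MeasureTheory Set Filter Topology Real

section Slices

variable {d : ℕ}

def slice (S : Set (Fin (d + 1) → ℝ)) (t : ℝ) : Set (Fin d → ℝ) :=
  {x | Fin.snoc x t ∈ S}

@[simp]
lemma mem_slice {S : Set (Fin (d + 1) → ℝ)} {x : Fin d → ℝ} {t : ℝ} :
    x ∈ slice S t ↔ Fin.snoc x t ∈ S :=
  Iff.rfl

lemma init_mem_slice {S : Set (Fin (d + 1) → ℝ)} {y : Fin (d + 1) → ℝ} (hy : y ∈ S) :
    Fin.init y ∈ slice S (y (Fin.last d)) := by
  rwa [mem_slice, Fin.snoc_init_self]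

lemma slice_subset_Icc {S : Set (Fin (d + 1) → ℝ)} (hS : S ⊆ Icc 0 1) (t : ℝ) :
    slice S t ⊆ Icc 0 1 := fun _ hx =>
  ⟨fun i => by simpa using (hS hx).1 i.castSucc, fun i => by simpa using (hS hx).2 i.castSucc⟩

def snocProd (B : Set (Fin d → ℝ)) (A : Set ℝ) : Set (Fin (d + 1) → ℝ) :=
  {y | Fin.init y ∈ B ∧ y (Fin.last d) ∈ A}

lemma Icc_snoc_snoc (a b : Fin d → ℝ) (s t : ℝ) :
    Icc (Fin.snoc a s : Fin (d + 1) → ℝ) (Fin.snoc b t) = snocProd (Icc a b) (Icc s t) := by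
  ext y
  simp only [snocProd, mem_Icc, mem_ofPred_eq, Pi.le_def, Fin.forall_fin_succ', Fin.snoc_castSucc,
    Fin.snoc_last, Fin.init]
  tauto

lemma volume_snocProd (B : Set (Fin d → ℝ)) (A : Set ℝ) :
    volume (snocProd B A) = volume B * volume A := by
  have he := volume_preserving_piFinSuccAbove (fun _ : Fin (d + 1) => ℝ) (Fin.last d)
  have : snocProd B A = MeasurableEquiv.piFinSuccAbove (fun _ => ℝ) (Fin.last d) ⁻¹' (A ×ˢ B) := by
    ext y; simp [snocProd, MeasurableEquiv.piFinSuccAbove_apply, and_comm]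
  rw [this, he.measure_preimage_equiv, Measure.volume_eq_prod, Measure.prod_prod, mul_comm]

lemma stairPath_succ_of_le (a b : Fin (d + 1) → ℝ) (h : a (Fin.last d) ≤ b (Fin.last d)) :
    stairPath (d + 1) a b = segment ℝ a (Fin.snoc (Fin.init a) (b (Fin.last d))) ∪
      (Fin.snoc · (b (Fin.last d))) '' stairPath d (Fin.init a) (Fin.init b) := by
  rw [stairPath, if_pos h]

lemma snoc_mem_segment_snoc (x : Fin d → ℝ) {s t u : ℝ} (hst : s ≤ t) (htu : t ≤ u) :
    (Fin.snoc x t : Fin (d + 1) → ℝ) ∈ segment ℝ (Fin.snoc x s) (Fin.snoc x u) := by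
  have hupd (r : ℝ) :
      (Fin.snoc x r : Fin (d + 1) → ℝ) = Function.update (Fin.snoc x 0) (Fin.last d) r :=
    (Fin.update_snoc_last _ _ _).symm
  rw [hupd t, hupd s, hupd u, ← Pi.image_update_segment, segment_eq_Icc (hst.trans htu)]
  exact mem_image_of_mem _ ⟨hst, htu⟩

variable {S : Set (Fin (d + 1) → ℝ)}

lemma StairConvex.snoc_mem (hsc : StairConvex S) {x : Fin d → ℝ} {y : Fin (d + 1) → ℝ}
    {s t : ℝ} (hx : Fin.snoc x s ∈ S) (hy : y ∈ S) (hst : s ≤ t) (hty : t ≤ y (Fin.last d)) :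
    Fin.snoc x t ∈ S := by
  have hpath := hsc _ hx _ hy
  rw [stairPath_succ_of_le _ _ (by simpa using hst.trans hty)] at hpath
  refine hpath (Or.inl ?_)
  simpa using snoc_mem_segment_snoc x hst hty

lemma StairConvex.stairConvex_slice (hsc : StairConvex S) (t : ℝ) : StairConvex (slice S t) := by
  intro a ha b hb w hw
  have hpath := hsc _ ha _ hb
  rw [stairPath_succ_of_le _ _ (by simp)] at hpath
  exact hpath (Or.inr ⟨w, by simpa using hw, by simp⟩)

lemma StairConvex.slice_subset_slice (hsc : StairConvex S) {T : ℝ}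
    (hT : IsLUB ((· (Fin.last d)) '' S) T) {s t : ℝ} (hst : s ≤ t) (htT : t < T) :
    slice S s ⊆ slice S t := by
  obtain ⟨_, ⟨y, hy, rfl⟩, hty, -⟩ := hT.exists_between htT
  exact fun x hx => hsc.snoc_mem hx hy hst hty.le

def sliceOrCube (S : Set (Fin (d + 1) → ℝ)) (T t : ℝ) : Set (Fin d → ℝ) :=
  if t < T then slice S t else Icc 0 1

lemma sliceOrCube_subset_Icc (hS : S ⊆ Icc 0 1) {T : ℝ} (t : ℝ) :
    sliceOrCube S T t ⊆ Icc 0 1 := by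
  unfold sliceOrCube; split_ifs
  exacts [slice_subset_Icc hS t, subset_rfl]

lemma slice_subset_sliceOrCube (hS : S ⊆ Icc 0 1) {T : ℝ} (t : ℝ) :
    slice S t ⊆ sliceOrCube S T t := by
  unfold sliceOrCube; split_ifs
  exacts [subset_rfl, slice_subset_Icc hS t]

lemma StairConvex.monotone_sliceOrCube (hsc : StairConvex S) (hS : S ⊆ Icc 0 1) {T : ℝ}
    (hT : IsLUB ((· (Fin.last d)) '' S) T) : Monotone (sliceOrCube S T) := by
  intro s t hst
  unfold sliceOrCube; split_ifs with hs ht ht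
  · exact hsc.slice_subset_slice hT hst ht
  · exact slice_subset_Icc hS s
  · exact absurd (hst.trans_lt ht) hs
  · exact subset_rfl

lemma StairConvex.snocProd_Icc_subset (hsc : StairConvex S) {T : ℝ}
    (hT : IsLUB ((· (Fin.last d)) '' S) T) {B : Set (Fin d → ℝ)} {s t : ℝ}
    (hB : B ⊆ slice S s) (htT : t < T) : snocProd B (Icc s t) ⊆ S := by
  rintro y ⟨hyB, hsy, hyt⟩
  rw [← Fin.snoc_init_self y]
  exact hsc.slice_subset_slice hT hsy (hyt.trans_lt htT) (hB hyB)

def BoxVolumeLE (S : Set (Fin d → ℝ)) (v : ℝ) : Prop :=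
  ∀ a b : Fin d → ℝ, a ≤ b → Icc a b ⊆ S → volume (Icc a b) ≤ ENNReal.ofReal v

lemma StairConvex.boxVolumeLE_slice (hsc : StairConvex S) {T v t : ℝ}
    (hT : IsLUB ((· (Fin.last d)) '' S) T) (hbox : BoxVolumeLE S v) (htT : t < T) :
    BoxVolumeLE (slice S t) (v / (T - t)) := by
  intro a b hab hsub
  have hstrip : ∀ s ∈ Ioo t T, volume (Icc a b) * ENNReal.ofReal (s - t) ≤ ENNReal.ofReal v := by
    intro s hs
    have hle : (Fin.snoc a t : Fin (d + 1) → ℝ) ≤ Fin.snoc b s :=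
      fun i => Fin.lastCases (by simpa using hs.1.le) (fun j => by simpa using hab j) i
    have := hbox _ _ hle
      ((Icc_snoc_snoc a b t s).trans_subset (hsc.snocProd_Icc_subset hT hsub hs.2))
    rwa [Icc_snoc_snoc, volume_snocProd, Real.volume_Icc] at this
  have hlim : Tendsto (fun s => volume (Icc a b) * ENNReal.ofReal (s - t)) (𝓝[<] T)
      (𝓝 (volume (Icc a b) * ENNReal.ofReal (T - t))) :=
    ENNReal.Tendsto.const_mul
      (ENNReal.tendsto_ofReal ((tendsto_id.sub_const t).mono_left nhdsWithin_le_nhds))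
      (Or.inr isCompact_Icc.measure_lt_top.ne)
  have := le_of_tendsto hlim (eventually_of_mem (Ioo_mem_nhdsLT htT) hstrip)
  rwa [ENNReal.ofReal_div_of_pos (sub_pos.2 htT),
    ENNReal.le_div_iff_mul_le (Or.inl (by simpa using htT)) (Or.inl ENNReal.ofReal_ne_top)]

end Slices

lemma StairConvex.volume_le_of_fin_one {S : Set (Fin 1 → ℝ)} (hS : BddAbove S)
    (hsc : StairConvex S) {v : ℝ} (hv : 0 ≤ v) (hbox : BoxVolumeLE S v) :
    volume S ≤ ENNReal.ofReal v := by
  rcases S.eq_empty_or_nonempty with rfl | hne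
  · simp
  have hT := isLUB_csSup (hne.image (· (Fin.last 0))) ((Function.monotone_eval _).map_bddAbove hS)
  set T := sSup ((· (Fin.last 0)) '' S)
  have hsub : S ⊆ snocProd univ (Icc (T - v) T) := by
    intro y hy
    have hyT : y (Fin.last 0) ≤ T := hT.1 ⟨y, hy, rfl⟩
    refine ⟨trivial, ?_, hyT⟩
    rcases hyT.lt_or_eq with hlt | heq
    · have hpt := hsc.boxVolumeLE_slice hT hbox hlt (Fin.init y) (Fin.init y) le_rfl
        (fun z _ => Subsingleton.elim (Fin.init y) z ▸ init_mem_slice hy)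
      rw [Real.volume_Icc_pi, Finset.univ_eq_empty, Finset.prod_empty, ENNReal.one_le_ofReal,
        one_le_div (sub_pos.2 hlt)] at hpt
      linarith
    · linarith
  calc volume S ≤ volume (snocProd univ (Icc (T - v) T)) := measure_mono hsub
    _ = ENNReal.ofReal v := by rw [volume_snocProd]; simp [volume_pi]

lemma Icc_zero_subset_biUnion_Icc (Δ : ℝ) (n : ℕ) :
    Icc 0 ((n + 1) * Δ) ⊆ ⋃ i ∈ Finset.range (n + 1), Icc (i * Δ) ((i + 1) * Δ) := by
  induction n with
  | zero => simp
  | succ n ih =>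
    rw [Finset.range_add_one, Finset.set_biUnion_insert, union_comm]
    push_cast
    exact Icc_subset_Icc_union_Icc.trans (union_subset_union_left _ ih)

lemma Monotone.sum_mul_le_integral_add {g : ℝ → ℝ} (hg : Monotone g) {Δ : ℝ} (hΔ : 0 ≤ Δ)
    (n : ℕ) : ∑ i ∈ Finset.range n, Δ * g ((i + 1) * Δ) ≤
      (∫ t in 0..n * Δ, g t) + Δ * (g (n * Δ) - g 0) := by
  have hstep (i : ℕ) : Δ * g (i * Δ) ≤ ∫ t in i * Δ..(i + 1) * Δ, g t := by
    calc Δ * g (i * Δ) = ∫ _ in i * Δ..(i + 1) * Δ, g (i * Δ) := by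
          rw [intervalIntegral.integral_const, smul_eq_mul]; ring
      _ ≤ ∫ t in i * Δ..(i + 1) * Δ, g t :=
        intervalIntegral.integral_mono_on (by nlinarith) intervalIntegrable_const
          hg.intervalIntegrable fun t ht => hg ht.1
  have htelescope : ∑ i ∈ Finset.range n, (Δ * g ((i + 1) * Δ) - Δ * g (i * Δ)) =
      Δ * g (n * Δ) - Δ * g 0 := by
    simpa using Finset.sum_range_sub (fun i : ℕ => Δ * g (i * Δ)) n
  have hadjacent : ∑ i ∈ Finset.range n, ∫ t in i * Δ..(i + 1) * Δ, g t = ∫ t in 0..n * Δ, g t := by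
    simpa using intervalIntegral.sum_integral_adjacent_intervals (a := fun i : ℕ => i * Δ)
      (n := n) fun _ _ => hg.intervalIntegrable
  calc ∑ i ∈ Finset.range n, Δ * g ((i + 1) * Δ)
      = ∑ i ∈ Finset.range n, Δ * g (i * Δ) + (Δ * g (n * Δ) - Δ * g 0) := by
        rw [← htelescope, ← Finset.sum_add_distrib]; simp
    _ ≤ ∑ i ∈ Finset.range n, (∫ t in i * Δ..(i + 1) * Δ, g t) + (Δ * g (n * Δ) - Δ * g 0) := by
        gcongr with i; exact hstep i
    _ = (∫ t in 0..n * Δ, g t) + Δ * (g (n * Δ) - g 0) := by rw [hadjacent]; ring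

lemma volume_le_integral_of_slice_subset {d : ℕ} {S : Set (Fin (d + 1) → ℝ)}
    {K : ℝ → Set (Fin d → ℝ)} {T : ℝ} (hK : Monotone K) (hKfin : ∀ t, volume (K t) ≠ ⊤)
    (hT : 0 ≤ T) (hS : ∀ y ∈ S, y (Fin.last d) ∈ Icc 0 T) (hSK : ∀ t, slice S t ⊆ K t) :
    volume S ≤ ENNReal.ofReal (∫ t in 0..T, (volume (K t)).toReal) := by
  set g : ℝ → ℝ := fun t => (volume (K t)).toReal
  have hg : Monotone g := fun s t hst => ENNReal.toReal_mono (hKfin t) (measure_mono (hK hst))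
  have hsum (n : ℕ) :
      volume S ≤ ENNReal.ofReal ((∫ t in 0..T, g t) + T / (n + 1) * (g T - g 0)) := by
    set Δ := T / (n + 1)
    have hΔ : 0 ≤ Δ := by positivity
    have hnΔ : (n + 1) * Δ = T := mul_div_cancel₀ T (by positivity)
    have hcover : S ⊆ ⋃ i ∈ Finset.range (n + 1),
        snocProd (K ((i + 1) * Δ)) (Icc (i * Δ) ((i + 1) * Δ)) := by
      intro y hy
      obtain ⟨i, hi, hyi⟩ := mem_iUnion₂.1 (Icc_zero_subset_biUnion_Icc Δ n (hnΔ ▸ hS y hy))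
      exact mem_iUnion₂.2 ⟨i, hi, hK hyi.2 (hSK _ (init_mem_slice hy)), hyi⟩
    calc volume S ≤ ∑ i ∈ Finset.range (n + 1),
          volume (snocProd (K ((i + 1) * Δ)) (Icc (i * Δ) ((i + 1) * Δ))) :=
        (measure_mono hcover).trans (measure_biUnion_finset_le _ _)
      _ = ∑ i ∈ Finset.range (n + 1), ENNReal.ofReal (Δ * g ((i + 1) * Δ)) := by
        refine Finset.sum_congr rfl fun i _ => ?_
        rw [volume_snocProd, Real.volume_Icc, ENNReal.ofReal_mul hΔ, mul_comm,
          ENNReal.ofReal_toReal (hKfin _)]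
        ring_nf
      _ = ENNReal.ofReal (∑ i ∈ Finset.range (n + 1), Δ * g ((i + 1) * Δ)) :=
        (ENNReal.ofReal_sum_of_nonneg fun _ _ => by positivity).symm
      _ ≤ _ := ENNReal.ofReal_le_ofReal (by
        simpa [hnΔ] using hg.sum_mul_le_integral_add hΔ (n + 1))
  have hlim : Tendsto (fun n : ℕ => ENNReal.ofReal ((∫ t in 0..T, g t) + T / (n + 1) * (g T - g 0)))
      atTop (𝓝 (ENNReal.ofReal (∫ t in 0..T, g t))) := by
    refine ENNReal.tendsto_ofReal ?_
    simpa [div_eq_mul_inv] using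
      ((tendsto_one_div_add_atTop_nhds_zero_nat.const_mul T).mul_const (g T - g 0)).const_add
        (∫ t in 0..T, g t)
  exact ge_of_tendsto' hlim hsum

section Calculus

variable {v a b : ℝ}

lemma intervalIntegrable_log_div_pow_div (k : ℕ) (hv : 0 < v) (ha : 0 < a) (hab : a ≤ b) :
    IntervalIntegrable (fun u => log (u / v) ^ k / u) volume a b := by
  have hpos : ∀ u ∈ uIcc a b, 0 < u := fun u hu =>
    ha.trans_le (by rw [uIcc_of_le hab] at hu; exact hu.1)
  refine ContinuousOn.intervalIntegrable ?_
  fun_prop (disch := intro u hu; have := hpos u hu; positivity)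

lemma integral_log_div_pow_div (k : ℕ) (hv : 0 < v) (ha : 0 < a) (hab : a ≤ b) :
    ∫ u in a..b, log (u / v) ^ k / u =
      (log (b / v) ^ (k + 1) - log (a / v) ^ (k + 1)) / (k + 1) := by
  have hderiv : ∀ u ∈ uIcc a b,
      HasDerivAt (fun u => log (u / v) ^ (k + 1) / (k + 1)) (log (u / v) ^ k / u) u := by
    intro u hu
    have hu : 0 < u := ha.trans_le (by rw [uIcc_of_le hab] at hu; exact hu.1)
    refine (((((hasDerivAt_id u).div_const v).log (by positivity)).fun_pow (k + 1)).div_const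
      ((k : ℝ) + 1)).congr_deriv ?_
    simp only [id, Nat.cast_add, Nat.cast_one, Nat.add_sub_cancel]
    field_simp
  rw [intervalIntegral.integral_eq_sub_of_hasDerivAt hderiv
    (intervalIntegrable_log_div_pow_div k hv ha hab), sub_div]

lemma integral_le_exp_mul_log_pow_succ {h : ℝ → ℝ} {k : ℕ} {T : ℝ} (hv0 : 0 < v)
    (hv1 : v ≤ 1 / exp 1) (hT0 : 0 ≤ T) (hT1 : T ≤ 1) (hint : IntervalIntegrable h volume 0 T)
    (h_le_one : ∀ u ∈ Icc 0 T, h u ≤ 1)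
    (h_le : ∀ u ∈ Icc (exp 1 * v) T, h u ≤ exp 1 * (v / u) * log (u / v) ^ k) :
    ∫ u in 0..T, h u ≤ exp 1 * v * log (1 / v) ^ (k + 1) := by
  set c := exp 1 * v
  have hc : 0 < c := by positivity
  have hlog_ge {x : ℝ} (hx : c ≤ x) : 1 ≤ log (x / v) := by
    rw [← log_exp 1]
    exact log_le_log (exp_pos 1) ((le_div_iff₀ hv0).2 hx)
  have hX : 1 ≤ log (1 / v) := hlog_ge ((le_div_iff₀ (exp_pos 1)).1 hv1 |>.trans_eq' (mul_comm _ _))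
  rcases le_or_gt T c with hTc | hcT
  · calc ∫ u in 0..T, h u ≤ ∫ _ in 0..T, (1 : ℝ) :=
          intervalIntegral.integral_mono_on hT0 hint intervalIntegrable_const h_le_one
      _ = T := by simp
      _ ≤ c * log (1 / v) ^ (k + 1) := hTc.trans (le_mul_of_one_le_right hc.le (one_le_pow₀ hX))
  set M := log (T / v) ^ (k + 1)
  have hM : 1 ≤ M := one_le_pow₀ (hlog_ge hcT.le)
  have hcmem : c ∈ uIcc 0 T := by rw [uIcc_of_le hT0]; exact ⟨hc.le, hcT.le⟩
  have hlow : ∫ u in 0..c, h u ≤ c := by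
    calc ∫ u in 0..c, h u ≤ ∫ _ in 0..c, (1 : ℝ) :=
          intervalIntegral.integral_mono_on hc.le
            (hint.mono_set (uIcc_subset_uIcc_left hcmem))
            intervalIntegrable_const fun u hu => h_le_one u ⟨hu.1, hu.2.trans hcT.le⟩
      _ = c := by simp
  have hhigh : ∫ u in c..T, h u ≤ c * ((M - 1) / (k + 1)) := by
    calc ∫ u in c..T, h u ≤ ∫ u in c..T, c * (log (u / v) ^ k / u) :=
          intervalIntegral.integral_mono_on hcT.le
            (hint.mono_set (uIcc_subset_uIcc_right hcmem))
            ((intervalIntegrable_log_div_pow_div k hv0 hc hcT.le).const_mul c)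
            fun u hu => (h_le u hu).trans_eq (by ring)
      _ = c * ((M - 1) / (k + 1)) := by
        rw [intervalIntegral.integral_const_mul, integral_log_div_pow_div k hv0 hc hcT.le,
          mul_div_cancel_right₀ _ hv0.ne', log_exp, one_pow]
  have hdiv : (M - 1) / (k + 1) ≤ M - 1 := div_le_self (by linarith) (by simp)
  calc ∫ u in 0..T, h u = (∫ u in 0..c, h u) + ∫ u in c..T, h u :=
        (intervalIntegral.integral_add_adjacent_intervals
          (hint.mono_set (uIcc_subset_uIcc_left hcmem))
          (hint.mono_set (uIcc_subset_uIcc_right hcmem))).symm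
    _ ≤ c * M := by nlinarith
    _ ≤ c * log (1 / v) ^ (k + 1) := by
        refine mul_le_mul_of_nonneg_left
          (pow_le_pow_left₀ (by linarith [hlog_ge hcT.le]) ?_ _) hc.le
        exact log_le_log (div_pos (hc.trans hcT) hv0) (div_le_div_of_nonneg_right hT1 hv0.le)

end Calculus

lemma StairConvex.volume_slice_sub_le {d k : ℕ} {S : Set (Fin (d + 1) → ℝ)}
    (hsc : StairConvex S) {T v u : ℝ} (hT : IsLUB ((· (Fin.last d)) '' S) T) (hv0 : 0 < v)
    (hbox : BoxVolumeLE S v)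
    (hslice : ∀ t w, 0 < w → w ≤ 1 / exp 1 → BoxVolumeLE (slice S t) w →
      volume (slice S t) ≤ ENNReal.ofReal (exp 1 * w * log (1 / w) ^ k))
    (hu : exp 1 * v ≤ u) :
    volume (slice S (T - u)) ≤ ENNReal.ofReal (exp 1 * (v / u) * log (u / v) ^ k) := by
  have hu0 : 0 < u := (by positivity : 0 < exp 1 * v).trans_le hu
  have hw1 : v / u ≤ 1 / exp 1 := by rw [div_le_div_iff₀ hu0 (exp_pos 1)]; linarith
  simpa [one_div_div] using hslice (T - u) (v / u) (div_pos hv0 hu0) hw1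
    (by simpa using hsc.boxVolumeLE_slice hT hbox (sub_lt_self T hu0))

lemma StairConvex.volume_le_of_volume_slice_le {d k : ℕ} {S : Set (Fin (d + 1) → ℝ)}
    (hS : S ⊆ Icc 0 1) (hsc : StairConvex S) {v : ℝ} (hv0 : 0 < v) (hv1 : v ≤ 1 / exp 1)
    (hbox : BoxVolumeLE S v)
    (hslice : ∀ t w, 0 < w → w ≤ 1 / exp 1 → BoxVolumeLE (slice S t) w →
      volume (slice S t) ≤ ENNReal.ofReal (exp 1 * w * log (1 / w) ^ k)) :
    volume S ≤ ENNReal.ofReal (exp 1 * v * log (1 / v) ^ (k + 1)) := by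
  rcases S.eq_empty_or_nonempty with rfl | hne
  · simp
  have hT := isLUB_csSup (hne.image (· (Fin.last d)))
    ((Function.monotone_eval _).map_bddAbove (bddAbove_Icc.mono hS))
  set T := sSup ((· (Fin.last d)) '' S)
  have hlast : ∀ y ∈ S, y (Fin.last d) ∈ Icc 0 T := fun y hy => ⟨(hS hy).1 _, hT.1 ⟨y, hy, rfl⟩⟩
  obtain ⟨y₀, hy₀⟩ := hne
  have hT0 : 0 ≤ T := (hlast y₀ hy₀).1.trans (hlast y₀ hy₀).2
  have hT1 : T ≤ 1 := hT.2 (by rintro _ ⟨y, hy, rfl⟩; exact (hS hy).2 _)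
  set K := sliceOrCube S T
  have hK_mono : Monotone K := hsc.monotone_sliceOrCube hS hT
  have hK_cube (t : ℝ) : K t ⊆ Icc 0 1 := sliceOrCube_subset_Icc hS t
  have hK_fin (t : ℝ) : volume (K t) ≠ ⊤ :=
    ((measure_mono (hK_cube t)).trans_lt isCompact_Icc.measure_lt_top).ne
  have hK_le_one (t : ℝ) : (volume (K t)).toReal ≤ 1 :=
    ENNReal.toReal_le_of_le_ofReal zero_le_one
      ((measure_mono (hK_cube t)).trans_eq (by simp [Real.volume_Icc_pi]))
  have hK_le (u : ℝ) (hu : u ∈ Icc (exp 1 * v) T) :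
      (volume (K (T - u))).toReal ≤ exp 1 * (v / u) * log (u / v) ^ k := by
    have hvu : v ≤ u := (le_mul_of_one_le_left hv0.le (one_le_exp zero_le_one)).trans hu.1
    have hu0 : 0 < u := hv0.trans_le hvu
    simp only [K, sliceOrCube, if_pos (sub_lt_self T hu0)]
    exact ENNReal.toReal_le_of_le_ofReal
      (by have := log_nonneg ((one_le_div hv0).2 hvu); positivity)
      (hsc.volume_slice_sub_le hT hv0 hbox hslice hu.1)
  have hK_anti : Antitone fun u => (volume (K (T - u))).toReal := fun a b hab =>
    ENNReal.toReal_mono (hK_fin _) (measure_mono (hK_mono (by linarith)))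
  calc volume S ≤ ENNReal.ofReal (∫ t in 0..T, (volume (K t)).toReal) :=
        volume_le_integral_of_slice_subset hK_mono hK_fin hT0 hlast
          (slice_subset_sliceOrCube hS)
    _ = ENNReal.ofReal (∫ u in 0..T, (volume (K (T - u))).toReal) := by
        rw [intervalIntegral.integral_comp_sub_left (fun t => (volume (K t)).toReal), sub_self,
          sub_zero]
    _ ≤ _ := ENNReal.ofReal_le_ofReal (integral_le_exp_mul_log_pow_succ hv0 hv1 hT0 hT1
        hK_anti.intervalIntegrable (fun u _ => hK_le_one _) hK_le)

/-- If a stair-convex `S ⊆ [0,1]^d` contains no closed axis-parallel box of volume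
larger than `v` (for `0 < v ≤ 1/e`), then `vol(S) ≤ e · v · (ln (1/v))^(d-1)`. -/
theorem stair_convex_volume_of_small_boxes (d : ℕ) (hd : 1 ≤ d)
    (S : Set (Fin d → ℝ)) (hS : S ⊆ Set.Icc 0 1) (hsc : StairConvex S)
    (v : ℝ) (hv0 : 0 < v) (hv1 : v ≤ 1 / Real.exp 1)
    (hbox : ∀ a b : Fin d → ℝ, a ≤ b → Set.Icc a b ⊆ S →
      MeasureTheory.volume (Set.Icc a b) ≤ ENNReal.ofReal v) :
    MeasureTheory.volume S ≤
      ENNReal.ofReal (Real.exp 1 * v * (Real.log (1 / v)) ^ (d - 1)) := by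
  induction d, hd using Nat.le_induction generalizing v with
  | base =>
    refine (hsc.volume_le_of_fin_one (bddAbove_Icc.mono hS) hv0.le hbox).trans
      (ENNReal.ofReal_le_ofReal ?_)
    simpa using le_mul_of_one_le_left hv0.le (Real.one_le_exp zero_le_one)
  | succ d hd ih =>
    have := hsc.volume_le_of_volume_slice_le hS hv0 hv1 hbox fun t w hw0 hw1 hw =>
      ih (slice S t) (slice_subset_Icc hS t) (hsc.stairConvex_slice t) w hw0 hw1 hw
    rw [Nat.sub_add_cancel hd] at this
    rwa [Nat.add_sub_cancel]
end

section
/- Let d ≥ 1 and 1 ≤ k ≤ d+1 be integers, let Q ⊂ ℝ^d be a set of k points, and let p ∈ sconv(Q). Then p shares at least d − k + 1 coordinates with Q; that is, the set of indices {i ∈ {1,…,d} : ∃ q ∈ Q with p_i = q_i} has at least d − k + 1 elements. -/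
/-- The stair-convex hull: the intersection of all stair-convex sets containing `X`. -/
def sconv {d : ℕ} (X : Set (Fin d → ℝ)) : Set (Fin d → ℝ) :=
  ⋂₀ {S : Set (Fin d → ℝ) | StairConvex S ∧ X ⊆ S}
/-!
Slice by the last coordinate. If `p` lies in the stair-convex hull of `Q`, then `p_d` lies between
the smallest and largest last coordinates of `Q`, and `(p_1, …, p_{d-1})` lies in the hull of the
projections of those `q ∈ Q` with `q_d ≤ p_d`; the set `stairHull d Q` of points satisfying this
recursively is stair-convex and contains `Q`, so it contains `sconv Q`. Passing from the slice to
`p`, either `p_d = q_d` for some `q ∈ Q`, which adds a shared coordinate, or the point of `Q` with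
the largest last coordinate is not projected, which removes a point. Either way the quantity
"shared coordinates + number of points" grows by at least one per dimension, so it is `≥ d + 1`.
-/

open Finset

noncomputable def projBelow {d : ℕ} (Q : Finset (Fin (d + 1) → ℝ)) (t : ℝ) :
    Finset (Fin d → ℝ) :=
  (Q.filter fun q => q (Fin.last d) ≤ t).image Fin.init

noncomputable def stairHull : (d : ℕ) → Finset (Fin d → ℝ) → Set (Fin d → ℝ)
  -- the hull of `∅` is `∅`, even in `ℝ^0`
  | 0, Q => {_p | Q.Nonempty}
  | d+1, Q => {p | (∃ q ∈ Q, q (Fin.last d) ≤ p (Fin.last d)) ∧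
      (∃ q ∈ Q, p (Fin.last d) ≤ q (Fin.last d)) ∧
      Fin.init p ∈ stairHull d (projBelow Q (p (Fin.last d)))}

open Classical in
noncomputable def sharedCoords {d : ℕ} (Q : Finset (Fin d → ℝ)) (p : Fin d → ℝ) :
    Finset (Fin d) :=
  univ.filter fun i => ∃ q ∈ Q, p i = q i

theorem projBelow_mono {d : ℕ} {Q Q' : Finset (Fin (d + 1) → ℝ)} (hQ : Q ⊆ Q') {t t' : ℝ}
    (ht : t ≤ t') : projBelow Q t ⊆ projBelow Q' t' :=
  image_subset_image fun _ hq =>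
    mem_filter.2 ⟨hQ (mem_filter.1 hq).1, (mem_filter.1 hq).2.trans ht⟩

theorem card_projBelow_le {d : ℕ} (Q : Finset (Fin (d + 1) → ℝ)) (t : ℝ) :
    #(projBelow Q t) ≤ #Q :=
  card_image_le.trans (card_filter_le _ _)

theorem card_projBelow_lt {d : ℕ} {Q : Finset (Fin (d + 1) → ℝ)} {t : ℝ}
    (h : ∃ q ∈ Q, t < q (Fin.last d)) : #(projBelow Q t) < #Q := by
  obtain ⟨q, hq, htq⟩ := h
  exact card_image_le.trans_lt (card_lt_card (filter_ssubset.2 ⟨q, hq, not_le.2 htq⟩))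

theorem stairHull_mono : ∀ {d : ℕ} {Q Q' : Finset (Fin d → ℝ)}, Q ⊆ Q' →
    stairHull d Q ⊆ stairHull d Q'
  | 0, _, _, h => fun _ hp => hp.mono h
  | _+1, _, _, h => fun _ ⟨⟨q, hq, hqp⟩, ⟨q', hq', hpq'⟩, hinit⟩ =>
    ⟨⟨q, h hq, hqp⟩, ⟨q', h hq', hpq'⟩, stairHull_mono (projBelow_mono h le_rfl) hinit⟩

theorem init_mem_stairHull_of_le {d : ℕ} {Q : Finset (Fin (d + 1) → ℝ)}
    {p : Fin (d + 1) → ℝ} (hp : p ∈ stairHull (d + 1) Q) {t : ℝ} (ht : p (Fin.last d) ≤ t) :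
    Fin.init p ∈ stairHull d (projBelow Q t) :=
  stairHull_mono (projBelow_mono Subset.rfl ht) hp.2.2

theorem subset_stairHull : ∀ {d : ℕ} (Q : Finset (Fin d → ℝ)),
    (Q : Set (Fin d → ℝ)) ⊆ stairHull d Q
  | 0, _ => fun q hq => ⟨q, hq⟩
  | _+1, _ => fun q hq =>
    ⟨⟨q, hq, le_rfl⟩, ⟨q, hq, le_rfl⟩,
      subset_stairHull _ (mem_image_of_mem _ (mem_filter.2 ⟨hq, le_rfl⟩))⟩

theorem init_eq_and_last_mem_segment_snoc {d : ℕ} {a z : Fin (d + 1) → ℝ} {t : ℝ}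
    (hz : z ∈ segment ℝ a (Fin.snoc (Fin.init a) t)) :
    Fin.init z = Fin.init a ∧ z (Fin.last d) ∈ segment ℝ (a (Fin.last d)) t := by
  constructor
  · have hinit (x : Fin (d + 1) → ℝ) :
        (LinearMap.funLeft ℝ ℝ Fin.castSucc).toAffineMap x = Fin.init x := rfl
    have := Set.mem_image_of_mem (LinearMap.funLeft ℝ ℝ Fin.castSucc).toAffineMap hz
    rwa [image_segment, hinit, hinit, hinit, Fin.init_snoc, segment_same,
      Set.mem_singleton_iff] at this
  · have := Set.mem_image_of_mem
      (LinearMap.proj (R := ℝ) (φ := fun _ => ℝ) (Fin.last d)).toAffineMap hz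
    rw [image_segment] at this
    simpa using this

theorem stairPath_subset_stairHull_succ {d : ℕ} (ih : ∀ Q, StairConvex (stairHull d Q))
    {Q : Finset (Fin (d + 1) → ℝ)} {a b : Fin (d + 1) → ℝ}
    (ha : a ∈ stairHull (d + 1) Q) (hb : b ∈ stairHull (d + 1) Q)
    (hab : a (Fin.last d) ≤ b (Fin.last d)) :
    segment ℝ a (Fin.snoc (Fin.init a) (b (Fin.last d))) ∪
      (fun z => Fin.snoc z (b (Fin.last d))) '' stairPath d (Fin.init a) (Fin.init b) ⊆
      stairHull (d + 1) Q := by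
  rintro z (hz | ⟨z, hz, rfl⟩)
  · obtain ⟨hinit, hlast⟩ := init_eq_and_last_mem_segment_snoc hz
    rw [segment_eq_Icc hab] at hlast
    obtain ⟨q, hq, hqa⟩ := ha.1
    obtain ⟨q', hq', hbq'⟩ := hb.2.1
    refine ⟨⟨q, hq, hqa.trans hlast.1⟩, ⟨q', hq', hlast.2.trans hbq'⟩, ?_⟩
    rw [hinit]
    exact init_mem_stairHull_of_le ha hlast.1
  · refine ⟨?_, ?_, ?_⟩ <;> simp only [Fin.snoc_last, Fin.init_snoc]
    · exact hb.1
    · exact hb.2.1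
    · exact ih _ _ (init_mem_stairHull_of_le ha hab) _ (init_mem_stairHull_of_le hb le_rfl) hz

theorem stairHull_stairConvex : ∀ {d : ℕ} (Q : Finset (Fin d → ℝ)),
    StairConvex (stairHull d Q)
  | 0, _ => fun _ ha _ _ _ _ => ha
  | _+1, _ => by
    intro a ha b hb
    rw [stairPath]
    split_ifs with hab
    · exact stairPath_subset_stairHull_succ stairHull_stairConvex ha hb hab
    · exact stairPath_subset_stairHull_succ stairHull_stairConvex hb ha (le_of_not_ge hab)

theorem card_sharedCoords_projBelow_add_le {d : ℕ} (Q : Finset (Fin (d + 1) → ℝ)) (t : ℝ)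
    (p : Fin (d + 1) → ℝ) :
    #(sharedCoords (projBelow Q t) (Fin.init p)) +
      (if ∃ q ∈ Q, p (Fin.last d) = q (Fin.last d) then 1 else 0) ≤ #(sharedCoords Q p) := by
  rw [sharedCoords, sharedCoords, card_filter, card_filter, Fin.sum_univ_castSucc]
  refine add_le_add (sum_le_sum fun i _ => ?_) le_rfl
  have hshared : (∃ q ∈ projBelow Q t, Fin.init p i = q i) →
      ∃ q ∈ Q, p i.castSucc = q i.castSucc := by
    rintro ⟨_, hq, h⟩
    obtain ⟨q, hqQ, rfl⟩ := mem_image.1 hq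
    exact ⟨q, (mem_filter.1 hqQ).1, h⟩
  split_ifs with h₁ h₂ <;> first | omega | exact absurd (hshared h₁) h₂

theorem le_card_sharedCoords_add_card :
    ∀ {d : ℕ} {Q : Finset (Fin d → ℝ)} {p : Fin d → ℝ}, p ∈ stairHull d Q →
      d + 1 ≤ #(sharedCoords Q p) + #Q
  | 0, _, _, hp => by
    have := hp.card_pos
    omega
  | d+1, Q, p, hp => by
    have ih := le_card_sharedCoords_add_card hp.2.2
    have hshared := card_sharedCoords_projBelow_add_le Q (p (Fin.last d)) p
    by_cases hlast : ∃ q ∈ Q, p (Fin.last d) = q (Fin.last d)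
    · rw [if_pos hlast] at hshared
      have := card_projBelow_le Q (p (Fin.last d))
      omega
    · rw [if_neg hlast] at hshared
      obtain ⟨q, hq, hpq⟩ := hp.2.1
      have := card_projBelow_lt ⟨q, hq, hpq.lt_of_ne fun h => hlast ⟨q, hq, h⟩⟩
      omega

open Classical in
theorem sconv_shares_coordinates_general (d k : ℕ)
    (Q : Finset (Fin d → ℝ)) (hQ : Q.card = k) (p : Fin d → ℝ)
    (hp : p ∈ sconv (↑Q : Set (Fin d → ℝ))) :
    d + 1 - k ≤ (Finset.univ.filter (fun i : Fin d => ∃ q ∈ Q, p i = q i)).card := by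
  have := le_card_sharedCoords_add_card (hp _ ⟨stairHull_stairConvex Q, subset_stairHull Q⟩)
  rw [sharedCoords, hQ] at this
  omega

open Classical in
/-- If `Q ⊂ ℝ^d` has `k ≤ d + 1` points and `p ∈ sconv Q`, then `p` shares at least
`d - k + 1` coordinates with `Q`. -/
theorem sconv_shares_coordinates (d k : ℕ) (hd : 1 ≤ d) (hk1 : 1 ≤ k) (hk2 : k ≤ d + 1)
    (Q : Finset (Fin d → ℝ)) (hQ : Q.card = k) (p : Fin d → ℝ)
    (hp : p ∈ sconv (↑Q : Set (Fin d → ℝ))) :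
    d + 1 - k ≤ (Finset.univ.filter (fun i : Fin d => ∃ q ∈ Q, p i = q i)).card :=
  sconv_shares_coordinates_general d k Q hQ p hp
end

section
/- Let d ≥ 1 be an integer and let P, Q ⊂ ℝ^d be finite point sets that do not share any coordinate, with |P| = s and |Q| = t. If s + t < d + 2, then sconv(P) ∩ sconv(Q) = ∅. -/
lemma subset_sconv {d : ℕ} (X : Set (Fin d → ℝ)) : X ⊆ sconv X :=
  fun _ hx => Set.mem_sInter.2 fun _ hS => hS.2 hx

lemma sconv_min {d : ℕ} {X S : Set (Fin d → ℝ)} (hXS : X ⊆ S) (hS : StairConvex S) :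
    sconv X ⊆ S :=
  Set.sInter_subset_of_mem ⟨hS, hXS⟩

lemma stairConvex_sconv {d : ℕ} (X : Set (Fin d → ℝ)) : StairConvex (sconv X) :=
  fun a ha b hb _ hx => Set.mem_sInter.2 fun S hS =>
    hS.1 a (Set.mem_sInter.1 ha S hS) b (Set.mem_sInter.1 hb S hS) hx

lemma sconv_empty {d : ℕ} : sconv (∅ : Set (Fin d → ℝ)) = ∅ :=
  Set.subset_empty_iff.1 <| sconv_min subset_rfl fun a ha => absurd ha (Set.notMem_empty a)

/-- The two branches of `stairPath (d + 1)` differ only by exchanging `a` and `b`. -/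
lemma StairConvex.of_legs {d : ℕ} {S : Set (Fin (d + 1) → ℝ)}
    (h : ∀ a ∈ S, ∀ b ∈ S, a (Fin.last d) ≤ b (Fin.last d) →
      segment ℝ a (Fin.snoc (Fin.init a) (b (Fin.last d))) ⊆ S ∧
        (fun z => Fin.snoc z (b (Fin.last d))) '' stairPath d (Fin.init a) (Fin.init b) ⊆ S) :
    StairConvex S := by
  intro a ha b hb
  rw [stairPath]
  split_ifs with hab
  · exact Set.union_subset (h a ha b hb hab).1 (h a ha b hb hab).2
  · have hba := (not_le.1 hab).le
    exact Set.union_subset (h b hb a ha hba).1 (h b hb a ha hba).2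

lemma mem_segment_snoc_init {d : ℕ} {a x : Fin (d + 1) → ℝ} {β : ℝ}
    (hx : x ∈ segment ℝ a (Fin.snoc (Fin.init a) β)) :
    Fin.init x = Fin.init a ∧ x (Fin.last d) ∈ segment ℝ (a (Fin.last d)) β := by
  obtain ⟨u, v, hu, hv, huv, rfl⟩ := hx
  refine ⟨funext fun i => ?_, ⟨u, v, hu, hv, huv, by simp⟩⟩
  simp only [Fin.init, Pi.add_apply, Pi.smul_apply, smul_eq_mul, Fin.snoc_castSucc]
  linear_combination a i.castSucc * huv

lemma stairConvex_preimage_last {d : ℕ} {I : Set ℝ} (hI : I.OrdConnected) :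
    StairConvex ((fun x : Fin (d + 1) → ℝ => x (Fin.last d)) ⁻¹' I) := by
  refine StairConvex.of_legs fun a ha b hb _ => ⟨fun x hx => ?_, ?_⟩
  · have hx_last := (mem_segment_snoc_init hx).2
    rw [segment_eq_uIcc] at hx_last
    exact hI.uIcc_subset ha hb hx_last
  · rintro _ ⟨z, -, rfl⟩
    simpa using hb

lemma StairConvex.setOf_last_lt_imp_init_mem {d : ℕ} {S : Set (Fin d → ℝ)}
    (hS : StairConvex S) (M : ℝ) :
    StairConvex {x : Fin (d + 1) → ℝ | x (Fin.last d) < M → Fin.init x ∈ S} := by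
  refine StairConvex.of_legs fun a ha b hb hab => ⟨fun x hx hxM => ?_, ?_⟩
  · obtain ⟨hx_init, hx_last⟩ := mem_segment_snoc_init hx
    rw [segment_eq_Icc hab] at hx_last
    rw [hx_init]
    exact ha (hx_last.1.trans_lt hxM)
  · rintro _ ⟨z, hz, rfl⟩ hbM
    simp only [Fin.snoc_last] at hbM
    rw [Fin.init_snoc]
    exact hS _ (ha (hab.trans_lt hbM)) _ (hb hbM) hz

lemma init_mem_sconv_of_last_lt {d : ℕ} {X : Set (Fin (d + 1) → ℝ)} {M : ℝ}
    {x : Fin (d + 1) → ℝ} (hx : x ∈ sconv X) (hxM : x (Fin.last d) < M) :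
    Fin.init x ∈ sconv (Fin.init '' {p ∈ X | p (Fin.last d) < M}) := by
  refine sconv_min (fun p hp hpM => ?_)
    ((stairConvex_sconv _).setOf_last_lt_imp_init_mem M) hx hxM
  exact subset_sconv _ ⟨p, ⟨hp, hpM⟩, rfl⟩

lemma disjoint_sconv_of_mem_of_forall_le {d : ℕ}
    (ih : ∀ P Q : Finset (Fin d → ℝ), (∀ i, ∀ p ∈ P, ∀ q ∈ Q, p i ≠ q i) →
      P.card + Q.card < d + 2 → Disjoint (sconv (P : Set (Fin d → ℝ))) (sconv ↑Q))
    {P Q : Finset (Fin (d + 1) → ℝ)} (hshare : ∀ i, ∀ p ∈ P, ∀ q ∈ Q, p i ≠ q i)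
    (hcard : P.card + Q.card < d + 3) {r : Fin (d + 1) → ℝ} (hr : r ∈ P)
    (hQr : ∀ q ∈ Q, q (Fin.last d) ≤ r (Fin.last d)) :
    Disjoint (sconv (P : Set (Fin (d + 1) → ℝ))) (sconv ↑Q) := by
  classical
  set M := r (Fin.last d)
  let below (R : Finset (Fin (d + 1) → ℝ)) : Finset (Fin d → ℝ) :=
    (R.filter fun p => p (Fin.last d) < M).image Fin.init
  have mem_below {R : Finset (Fin (d + 1) → ℝ)} {x : Fin (d + 1) → ℝ} (hx : x ∈ sconv ↑R)
      (hxM : x (Fin.last d) < M) : Fin.init x ∈ sconv (↑(below R) : Set (Fin d → ℝ)) := by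
    simpa [below] using init_mem_sconv_of_last_lt hx hxM
  have hQM : ∀ q ∈ Q, q (Fin.last d) < M := fun q hq =>
    (hQr q hq).lt_of_ne (hshare _ r hr q hq).symm
  have hcard_P : (below P).card < P.card :=
    Finset.card_image_le.trans_lt <| Finset.card_lt_card <|
      Finset.filter_ssubset.2 ⟨r, hr, lt_irrefl M⟩
  have hcard_Q : (below Q).card ≤ Q.card :=
    Finset.card_image_le.trans (Finset.card_filter_le _ _)
  have hshare_below : ∀ i, ∀ p ∈ below P, ∀ q ∈ below Q, p i ≠ q i := by
    simp only [below, Finset.mem_image, Finset.mem_filter]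
    rintro i _ ⟨p, ⟨hp, -⟩, rfl⟩ _ ⟨q, ⟨hq, -⟩, rfl⟩
    exact hshare i.castSucc p hp q hq
  rw [Set.disjoint_left]
  intro x hxP hxQ
  have hxM : x (Fin.last d) < M :=
    sconv_min (fun q hq => hQM q hq) (stairConvex_preimage_last Set.ordConnected_Iio) hxQ
  exact Set.disjoint_left.1 (ih _ _ hshare_below (by omega)) (mem_below hxP hxM)
    (mem_below hxQ hxM)

theorem disjoint_sconv_of_card_add_card_lt (d : ℕ) (P Q : Finset (Fin d → ℝ))
    (hshare : ∀ i, ∀ p ∈ P, ∀ q ∈ Q, p i ≠ q i) (hcard : P.card + Q.card < d + 2) :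
    Disjoint (sconv (P : Set (Fin d → ℝ))) (sconv ↑Q) := by
  induction d with
  | zero =>
    obtain hP | hQ : P.card = 0 ∨ Q.card = 0 := by omega
    · simp [Finset.card_eq_zero.1 hP, sconv_empty]
    · simp [Finset.card_eq_zero.1 hQ, sconv_empty]
  | succ d ih =>
    rcases P.eq_empty_or_nonempty with rfl | hP
    · simp [sconv_empty]
    obtain ⟨r, hr, hr_max⟩ := (P ∪ Q).exists_max_image (fun y => y (Fin.last d))
      (hP.mono Finset.subset_union_left)
    rcases Finset.mem_union.1 hr with hrP | hrQ
    · exact disjoint_sconv_of_mem_of_forall_le ih hshare hcard hrP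
        fun q hq => hr_max q (Finset.mem_union_right _ hq)
    · exact (disjoint_sconv_of_mem_of_forall_le ih (fun i q hq p hp => (hshare i p hp q hq).symm)
        (by omega) hrQ fun p hp => hr_max p (Finset.mem_union_left _ hp)).symm

theorem sconv_disjoint_of_few_points_general (d s t : ℕ)
    (P Q : Finset (Fin d → ℝ)) (hs : P.card = s) (ht : Q.card = t)
    (hshare : ∀ i : Fin d, ∀ p ∈ P, ∀ q ∈ Q, p i ≠ q i)
    (hcard : s + t < d + 2) :
    sconv (↑P : Set (Fin d → ℝ)) ∩ sconv (↑Q : Set (Fin d → ℝ)) = ∅ := by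
  subst hs ht
  exact Set.disjoint_iff_inter_eq_empty.1 (disjoint_sconv_of_card_add_card_lt d P Q hshare hcard)

/-- If `P, Q ⊂ ℝ^d` are finite sets sharing no coordinate and `|P| + |Q| < d + 2`,
then their stair-convex hulls are disjoint. -/
theorem sconv_disjoint_of_few_points (d s t : ℕ) (hd : 1 ≤ d)
    (P Q : Finset (Fin d → ℝ)) (hs : P.card = s) (ht : Q.card = t)
    (hshare : ∀ i : Fin d, ∀ p ∈ P, ∀ q ∈ Q, p i ≠ q i)
    (hcard : s + t < d + 2) :
    sconv (↑P : Set (Fin d → ℝ)) ∩ sconv (↑Q : Set (Fin d → ℝ)) = ∅ :=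
  sconv_disjoint_of_few_points_general d s t P Q hs ht hshare hcard
end

section
/- Let d ≥ 1 and m ≥ 2 be integers, let S ⊆ [0,1]^d be a stair-convex set, and let δ > 0. Define S^{δ−} = {p ∈ ℝ^d : p + q ∈ S for every q ∈ [0,δ]^d}. Then: (1) S^{δ−} is stair-convex; (2) vol(S^{δ−}) ≥ vol(S) − d·δ, where vol denotes Lebesgue (outer) measure; and (3) |S^{δ−} ∩ Gu(m)| ≥ |S ∩ Gu(m)| − d·⌈(m−1)δ⌉·m^{d−1}. -/
/-- The erosion `S ⊖ [0,δ]^d = {p : p + q ∈ S for all q ∈ [0,δ]^d}`. -/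
def shrink {d : ℕ} (S : Set (Fin d → ℝ)) (δ : ℝ) : Set (Fin d → ℝ) :=
  {p | ∀ q : Fin d → ℝ, (∀ i : Fin d, q i ∈ Set.Icc 0 δ) → p + q ∈ S}

open Classical in
/-- The uniform grid `Gu(m) = {0, 1/(m-1), …, 1}^d` as a finite set. -/
noncomputable def uniformGrid (d m : ℕ) : Finset (Fin d → ℝ) :=
  (Finset.univ : Finset (Fin d → Fin m)).image (fun f i => (f i : ℝ) / (m - 1))

/-!
Stair paths commute with translations, so eroding a stair-convex set by any set of vectors
keeps it stair-convex.

For the losses, erode one coordinate at a time: `shrinkFrom S δ k` only uses the box directions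
`i ≥ k`, so it is `shrink S δ` for `k = 0` and contains `S` for `k = d`. A point `p` removed at
step `k` has no point of `shrinkFrom S δ (k + 1)` at distance `≥ δ` above it in direction `k` with
the same later coordinates: by stair-convexity in direction `k`, the segment up to such a point
would absorb the `k`-th component of every box vector. Hence the points removed at step `k` form a
set that is thin in direction `k`, which has volume at most `δ` in `[0,1]^d` and meets each grid
line in direction `k` in at most `⌈(m-1)δ⌉` points. The removed set need not be measurable, so for
the volume it is enclosed in a strip `{p | upperProfile V k p - p k ∈ [0, δ]}` whose measurability
comes from the monotonicity of the profile.
-/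

open Set MeasureTheory Function
open scoped ENNReal

theorem Fin.snoc_init_eq_update {α : Type*} {d : ℕ} (p : Fin (d + 1) → α) (z : α) :
    Fin.snoc (Fin.init p) z = update p (Fin.last d) z := by
  conv_rhs => rw [← Fin.snoc_init_self p]
  rw [Fin.update_snoc_last]

theorem Fin.snoc_add {M : Type*} [Add M] {d : ℕ} (z : Fin d → M) (c : M)
    (q : Fin (d + 1) → M) :
    Fin.snoc z c + q = Fin.snoc (z + Fin.init q) (c + q (Fin.last d)) := by
  ext i
  induction i using Fin.lastCases <;> simp [Fin.init]

theorem mem_stairPath_add {d : ℕ} {a b x : Fin d → ℝ} (q : Fin d → ℝ)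
    (hx : x ∈ stairPath d a b) : x + q ∈ stairPath d (a + q) (b + q) := by
  induction d with
  | zero => trivial
  | succ d ih =>
    have hseg {u v : Fin (d + 1) → ℝ} (h : x ∈ segment ℝ u v) :
        x + q ∈ segment ℝ (u + q) (v + q) := by
      simpa only [add_comm q] using (mem_segment_translate ℝ q).2 h
    rw [stairPath] at hx ⊢
    simp only [Pi.add_apply, add_le_add_iff_right]
    split_ifs at hx ⊢ <;>
    · rcases hx with hx | ⟨z, hz, rfl⟩
      · left
        convert hseg hx using 2
        rw [Fin.snoc_add]
        rfl
      · exact Or.inr ⟨z + Fin.init q, ih (Fin.init q) hz, (Fin.snoc_add ..).symm⟩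

theorem mem_stairPath_snoc {d : ℕ} {a b z : Fin d → ℝ} (c : ℝ) (hz : z ∈ stairPath d a b) :
    Fin.snoc z c ∈ stairPath (d + 1) (Fin.snoc a c) (Fin.snoc b c) := by
  rw [stairPath, if_pos (by simp)]
  exact Or.inr ⟨z, by simpa using hz, by simp⟩

namespace StairConvex

variable {d : ℕ}

theorem snoc_preimage {S : Set (Fin (d + 1) → ℝ)} (hS : StairConvex S) (c : ℝ) :
    StairConvex ((Fin.snoc · c) ⁻¹' S : Set (Fin d → ℝ)) :=
  fun _ ha _ hb _ hz => hS _ ha _ hb (mem_stairPath_snoc c hz)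

theorem update_mem {S : Set (Fin d → ℝ)} (hS : StairConvex S) {p x : Fin d → ℝ}
    (hp : p ∈ S) (hx : x ∈ S) {k : Fin d} (hpx : ∀ j, k < j → p j = x j) {t : ℝ}
    (ht : t ∈ Icc (p k) (x k)) : update p k t ∈ S := by
  induction d with
  | zero => exact k.elim0
  | succ d ih =>
    induction k using Fin.lastCases with
    | last =>
      have hle : p (Fin.last d) ≤ x (Fin.last d) := ht.1.trans ht.2
      have hseg :
          update p (Fin.last d) t ∈ segment ℝ p (update p (Fin.last d) (x (Fin.last d))) := by
        have :=
          Pi.image_update_segment (𝕜 := ℝ) (Fin.last d) (p (Fin.last d)) (x (Fin.last d)) p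
        rw [update_eq_self, segment_eq_Icc hle] at this
        exact this ▸ mem_image_of_mem _ ht
      have := hS p hp x hx
      rw [stairPath, if_pos hle, Fin.snoc_init_eq_update] at this
      exact this (Or.inl hseg)
    | cast k =>
      have hlast : p (Fin.last d) = x (Fin.last d) := hpx _ (Fin.castSucc_lt_last k)
      have hp' : Fin.init p ∈ (Fin.snoc · (p (Fin.last d))) ⁻¹' S := by
        simpa [Fin.snoc_init_self] using hp
      have hx' : Fin.init x ∈ (Fin.snoc · (p (Fin.last d))) ⁻¹' S := by
        simpa [hlast, Fin.snoc_init_self] using hx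
      have := ih (hS.snoc_preimage _) hp' hx'
        (fun j hj => hpx _ (Fin.castSucc_lt_castSucc_iff.2 hj)) ht
      rwa [mem_preimage, Fin.snoc_update, Fin.snoc_init_self] at this

theorem ite_lt_mem {S : Set (Fin d → ℝ)} (hS : StairConvex S) {p y : Fin d → ℝ} (hp : p ∈ S)
    (hy : y ∈ S) {n : ℕ} (hyp : ∀ j : Fin d, n ≤ (j : ℕ) → y j ≤ p j) :
    (fun j : Fin d => if (j : ℕ) < n then y j else p j) ∈ S := by
  obtain ⟨r, hr⟩ : ∃ r, d - n = r := ⟨_, rfl⟩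
  induction r generalizing n with
  | zero =>
    convert hy using 1
    ext j
    exact if_pos (by omega)
  | succ r ih =>
    have hmix := ih (n := n + 1) (fun j hj => hyp j (by omega)) (by omega)
    convert hS.update_mem hmix hp (k := ⟨n, by omega⟩) (fun j hj => if_neg ?_)
      ⟨(if_pos (Nat.lt_succ_self n)).trans_le (hyp _ le_rfl), le_rfl⟩ using 1
    · ext j
      rcases eq_or_ne j ⟨n, by omega⟩ with rfl | hj
      · simp
      · rw [update_of_ne hj]
        have : (j : ℕ) ≠ n := fun h => hj (Fin.ext h)
        by_cases hjn : (j : ℕ) < n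
        · simp [hjn, show (j : ℕ) < n + 1 by omega]
        · simp [hjn, show ¬ (j : ℕ) < n + 1 by omega]
    · rw [Fin.lt_def] at hj
      simp only at hj
      omega

end StairConvex

def shrinkFrom {d : ℕ} (S : Set (Fin d → ℝ)) (δ : ℝ) (k : ℕ) : Set (Fin d → ℝ) :=
  {p | ∀ q : Fin d → ℝ, (∀ i, q i ∈ Icc 0 δ) → (∀ i : Fin d, (i : ℕ) < k → q i = 0) →
    p + q ∈ S}

section shrinkFrom

variable {d : ℕ} {S : Set (Fin d → ℝ)} {δ : ℝ}

theorem shrinkFrom_zero (S : Set (Fin d → ℝ)) (δ : ℝ) : shrinkFrom S δ 0 = shrink S δ := by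
  ext p
  exact ⟨fun h q hq => h q hq fun i hi => absurd hi i.val.not_lt_zero, fun h q hq _ => h q hq⟩

theorem subset_shrinkFrom_dim (S : Set (Fin d → ℝ)) (δ : ℝ) : S ⊆ shrinkFrom S δ d := by
  intro p hp q _ hq0
  rwa [show q = 0 from funext fun i => hq0 i i.isLt, add_zero]

theorem shrinkFrom_subset (hδ : 0 ≤ δ) (k : ℕ) : shrinkFrom S δ k ⊆ S := by
  intro p hp
  simpa using hp 0 (fun _ => ⟨le_rfl, hδ⟩) fun _ _ => rfl

theorem stairConvex_shrinkFrom (hS : StairConvex S) (δ : ℝ) (k : ℕ) :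
    StairConvex (shrinkFrom S δ k) :=
  fun _ ha _ hb _ hx q hq hq0 => hS _ (ha q hq hq0) _ (hb q hq hq0) (mem_stairPath_add q hx)

theorem StairConvex.lt_add_of_mem_shrinkFrom_diff (hS : StairConvex S) {k : Fin d}
    {p z : Fin d → ℝ} (hp : p ∈ shrinkFrom S δ (k + 1) \ shrinkFrom S δ k)
    (hz : z ∈ shrinkFrom S δ (k + 1)) (hzp : ∀ j, k < j → p j = z j) : z k < p k + δ := by
  refine lt_of_not_ge fun hpz => hp.2 fun q hq hq0 => ?_
  have hmid : update p k (p k + q k) ∈ shrinkFrom S δ (k + 1) :=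
    (stairConvex_shrinkFrom hS δ _).update_mem hp.1 hz hzp
      ⟨le_add_of_nonneg_right (hq k).1, by linarith [(hq k).2]⟩
  convert hmid (update q k 0) (fun i => ?_) (fun i hi => ?_) using 1
  · ext i
    rcases eq_or_ne i k with rfl | hik <;> simp [*]
  · rcases eq_or_ne i k with rfl | hik
    · simpa using (hq i).1.trans (hq i).2
    · simpa [hik] using hq i
  · rcases eq_or_ne i k with rfl | hik
    · simp
    · simpa [hik] using hq0 i (by omega)

end shrinkFrom

theorem exists_mem_succ_diff {α : Type*} {A : ℕ → Set α} {x : α} {n : ℕ} (hn : x ∈ A n)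
    (h0 : x ∉ A 0) : ∃ k < n, x ∈ A (k + 1) \ A k := by
  induction n with
  | zero => exact absurd hn h0
  | succ n ih =>
    by_cases h : x ∈ A n
    · obtain ⟨k, hk, hx⟩ := ih h
      exact ⟨k, by omega, hx⟩
    · exact ⟨n, by omega, hn, h⟩

theorem subset_shrink_union_iUnion {d : ℕ} (S : Set (Fin d → ℝ)) (δ : ℝ) :
    S ⊆ shrink S δ ∪ ⋃ k : Fin d, shrinkFrom S δ (k + 1) \ shrinkFrom S δ k := by
  intro p hp
  by_cases h0 : p ∈ shrinkFrom S δ 0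
  · exact Or.inl (shrinkFrom_zero S δ ▸ h0)
  · obtain ⟨k, hk, hpk⟩ := exists_mem_succ_diff (subset_shrinkFrom_dim S δ hp) h0
    exact Or.inr (mem_iUnion.2 ⟨⟨k, hk⟩, hpk⟩)

noncomputable def upperProfile {d : ℕ} (V : Set (Fin d → ℝ)) (k : Fin d) (p : Fin d → ℝ) : ℝ :=
  sSup ((· k) '' {y ∈ V | ∀ j, k < j → y j ≤ p j})

section upperProfile

variable {d : ℕ} {V : Set (Fin d → ℝ)} {k : Fin d} {p p' : Fin d → ℝ}

theorem le_upperProfile (hV : V ⊆ Icc 0 1) (hp : p ∈ V) : p k ≤ upperProfile V k p := by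
  refine le_csSup ⟨1, ?_⟩ ⟨p, ⟨hp, fun _ _ => le_rfl⟩, rfl⟩
  rintro _ ⟨y, ⟨hy, -⟩, rfl⟩
  exact (hV hy).2 k

theorem upperProfile_mono (hV : V ⊆ Icc 0 1) (h : ∀ j, k < j → p j ≤ p' j) :
    upperProfile V k p ≤ upperProfile V k p' := by
  rcases ((· k) '' {y ∈ V | ∀ j, k < j → y j ≤ p j}).eq_empty_or_nonempty with he | hne
  · rw [upperProfile, he, Real.sSup_empty]
    refine Real.sSup_nonneg ?_
    rintro _ ⟨y, ⟨hy, -⟩, rfl⟩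
    exact (hV hy).1 k
  · refine csSup_le_csSup ⟨1, ?_⟩ hne ?_
    · rintro _ ⟨y, ⟨hy, -⟩, rfl⟩
      exact (hV hy).2 k
    · rintro _ ⟨y, ⟨hy, hyp⟩, rfl⟩
      exact ⟨y, ⟨hy, fun j hj => (hyp j hj).trans (h j hj)⟩, rfl⟩

theorem upperProfile_congr (hV : V ⊆ Icc 0 1) (h : ∀ j, k < j → p j = p' j) :
    upperProfile V k p = upperProfile V k p' :=
  (upperProfile_mono hV fun j hj => (h j hj).le).antisymm
    (upperProfile_mono hV fun j hj => (h j hj).ge)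

theorem measurePreserving_ite_neg {ι : Type*} [Fintype ι] [DecidableEq ι] (k : ι) :
    MeasurePreserving (fun (p : ι → ℝ) i => if i = k then -p i else p i) := by
  refine volume_preserving_pi (f := fun i (t : ℝ) => if i = k then -t else t) fun i => ?_
  split_ifs
  · exact Measure.measurePreserving_neg volume
  · exact MeasurePreserving.id volume

/-- Reflecting the `k`-th coordinate turns this set into the preimage of an interval under a
monotone function, hence into an order-connected set, whose frontier is Lebesgue-null. -/
theorem nullMeasurableSet_upperProfile_sub_mem_Icc (hV : V ⊆ Icc 0 1) (k : Fin d) (δ : ℝ) :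
    NullMeasurableSet {p | upperProfile V k p - p k ∈ Icc 0 δ} := by
  have hmono : Monotone fun x : Fin d → ℝ => x k + upperProfile V k x :=
    fun x x' hx => add_le_add (hx k) (upperProfile_mono hV fun j _ => hx j)
  have hconn := (ordConnected_Icc (a := (0 : ℝ)) (b := δ)).preimage_mono hmono
  convert hconn.nullMeasurableSet.preimage (measurePreserving_ite_neg k).quasiMeasurePreserving
    using 1
  ext p
  have hprof : upperProfile V k (fun i => if i = k then -p i else p i) = upperProfile V k p :=
    upperProfile_congr hV fun j hj => if_neg hj.ne'
  simp [hprof, sub_eq_neg_add]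

end upperProfile

section thin

variable {d : ℕ} {C : Set (Fin d → ℝ)} {k : Fin d} {δ : ℝ}

/-- The translates of `C` by `j • c • eₖ`, `j < n`, are disjoint and fit in a box of
volume `1 + n c`. -/
theorem natCast_mul_volume_le_of_thin (hC : NullMeasurableSet C) (hC1 : C ⊆ Icc 0 1)
    (hthin : ∀ p ∈ C, ∀ p' ∈ C, (∀ j, j ≠ k → p j = p' j) → p k ≤ p' k + δ)
    {c : ℝ} (hc : 0 ≤ c) (hδc : δ < c) (n : ℕ) :
    n * volume C ≤ ENNReal.ofReal (1 + n * c) := by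
  set e : Fin d → ℝ := Pi.single k c with he
  set T : ℕ → Set (Fin d → ℝ) := fun j => (fun x => -((j : ℝ) • e) + x) ⁻¹' C with hT
  have hdisj : Pairwise (Disjoint on T) := by
    refine (pairwise_disjoint_on T).2 fun i j hij => Set.disjoint_left.2 fun x hi hj => ?_
    have hle := hthin _ hi _ hj fun l hl => by simp [e, hl]
    have hij' : (i : ℝ) + 1 ≤ j := by exact_mod_cast hij
    simp only [he, Pi.add_apply, Pi.neg_apply, Pi.smul_apply, Pi.single_eq_same,
      smul_eq_mul] at hle
    nlinarith
  have hbox : ⋃ j ∈ Finset.range n, T j ⊆ Icc 0 (1 + (n : ℝ) • e) := by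
    simp only [iUnion_subset_iff, Finset.mem_range]
    intro j hj x hx
    have he0 : 0 ≤ e := Pi.single_nonneg.2 hc
    have hje : (j : ℝ) • e ∈ Icc 0 ((n : ℝ) • e) :=
      ⟨smul_nonneg j.cast_nonneg he0,
        smul_le_smul_of_nonneg_right (by exact_mod_cast hj.le) he0⟩
    simpa using Set.Icc_add_Icc_subset _ _ _ _ (add_mem_add (hC1 hx) hje)
  calc (n : ℝ≥0∞) * volume C = ∑ j ∈ Finset.range n, volume (T j) := by
        simp [hT, measure_preimage_add]
    _ = volume (⋃ j ∈ Finset.range n, T j) :=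
        (measure_biUnion_finset₀ ((hdisj.set_pairwise _).mono' fun _ _ h => h.aedisjoint)
          fun j _ => hC.preimage (measurePreserving_add_left volume _).quasiMeasurePreserving).symm
    _ ≤ volume (Icc 0 (1 + (n : ℝ) • e)) := measure_mono hbox
    _ = ENNReal.ofReal (1 + n * c) := by
        rw [Real.volume_Icc_pi,
          Finset.prod_eq_single k (fun i _ hi => by simp [he, hi]) (by simp)]
        simp [he]

open Filter Topology in
theorem volume_le_of_thin (hδ : 0 ≤ δ) (hC : NullMeasurableSet C) (hC1 : C ⊆ Icc 0 1)
    (hthin : ∀ p ∈ C, ∀ p' ∈ C, (∀ j, j ≠ k → p j = p' j) → p k ≤ p' k + δ) :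
    volume C ≤ ENNReal.ofReal δ := by
  have hlim : Tendsto (fun N : ℕ => ENNReal.ofReal (δ + 2 * (1 / ((N : ℝ) + 1)))) atTop
      (𝓝 (ENNReal.ofReal δ)) := by
    simpa using ENNReal.tendsto_ofReal
      ((tendsto_one_div_add_atTop_nhds_zero_nat.const_mul 2).const_add δ)
  refine ge_of_tendsto' hlim fun N => ?_
  have hN : (0 : ℝ) < N + 1 := by positivity
  have hmul := natCast_mul_volume_le_of_thin hC hC1 hthin (c := δ + 1 / (N + 1))
    (by positivity) (by simpa using hN) (N + 1)
  calc volume C ≤ ENNReal.ofReal (1 + (N + 1 : ℕ) * (δ + 1 / (N + 1))) / (N + 1 : ℕ) :=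
        (ENNReal.le_div_iff_mul_le (by simp) (by simp)).2 (by rwa [mul_comm])
    _ = ENNReal.ofReal (δ + 2 * (1 / ((N : ℝ) + 1))) := by
        rw [← ENNReal.ofReal_natCast, ← ENNReal.ofReal_div_of_pos (by positivity)]
        congr 1
        push_cast
        field_simp
        ring

end thin

section lost

variable {d : ℕ} {S : Set (Fin d → ℝ)} {δ : ℝ}

theorem StairConvex.upperProfile_le_of_mem_shrinkFrom_diff (hS : StairConvex S) {k : Fin d}
    {p : Fin d → ℝ} (hp : p ∈ shrinkFrom S δ (k + 1) \ shrinkFrom S δ k) :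
    upperProfile (shrinkFrom S δ (k + 1)) k p ≤ p k + δ := by
  refine le_of_not_gt fun hlt => ?_
  obtain ⟨_, ⟨y, ⟨hy, hyp⟩, rfl⟩, hyk⟩ :=
    exists_lt_of_lt_csSup (by exact ⟨p k, p, ⟨hp.1, fun _ _ => le_rfl⟩, rfl⟩) hlt
  have hz := (stairConvex_shrinkFrom hS δ (k + 1)).ite_lt_mem hp.1 hy
    fun j hj => hyp j (Fin.lt_def.2 hj)
  have := hS.lt_add_of_mem_shrinkFrom_diff hp hz fun j hj => (if_neg (not_lt.2 hj)).symm
  rw [if_pos k.val.lt_succ_self] at this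
  exact lt_asymm hyk this

theorem StairConvex.volume_shrinkFrom_diff_le (hS : StairConvex S) (hS1 : S ⊆ Icc 0 1)
    (hδ : 0 ≤ δ) (k : Fin d) :
    volume (shrinkFrom S δ (k + 1) \ shrinkFrom S δ k) ≤ ENNReal.ofReal δ := by
  set V := shrinkFrom S δ (k + 1)
  have hV : V ⊆ Icc 0 1 := (shrinkFrom_subset hδ _).trans hS1
  calc volume (V \ shrinkFrom S δ k)
      ≤ volume ({p | upperProfile V k p - p k ∈ Icc 0 δ} ∩ Icc 0 1) :=
        measure_mono fun p hp => ⟨⟨sub_nonneg.2 (le_upperProfile hV hp.1),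
          sub_le_iff_le_add'.2 (hS.upperProfile_le_of_mem_shrinkFrom_diff hp)⟩, hV hp.1⟩
    _ ≤ ENNReal.ofReal δ := by
        refine volume_le_of_thin (k := k) hδ
          ((nullMeasurableSet_upperProfile_sub_mem_Icc hV k δ).inter
            measurableSet_Icc.nullMeasurableSet) inter_subset_right
          fun p ⟨⟨hp, _⟩, _⟩ p' ⟨⟨_, hp'⟩, _⟩ hpp' => ?_
        have := upperProfile_congr hV fun j hj => hpp' j hj.ne'
        linarith

end lost

theorem Finset.card_le_of_forall_lt_add {T : Finset ℕ} {N : ℕ}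
    (h : ∀ a ∈ T, ∀ b ∈ T, b < a + N) : T.card ≤ N := by
  rcases T.eq_empty_or_nonempty with rfl | hT
  · simp
  · calc T.card ≤ (Finset.Ico (T.min' hT) (T.min' hT + N)).card :=
          Finset.card_le_card fun b hb =>
            Finset.mem_Ico.2 ⟨T.min'_le b hb, h _ (T.min'_mem hT) b hb⟩
      _ = N := by simp

theorem card_le_mul_pow_of_thin {ι : Type*} [Fintype ι] [DecidableEq ι] {m N : ℕ} (k : ι)
    (s : Finset (ι → Fin m))
    (hs : ∀ f ∈ s, ∀ f' ∈ s, (∀ j, j ≠ k → f j = f' j) → (f k : ℕ) < f' k + N) :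
    s.card ≤ N * m ^ (Fintype.card ι - 1) := by
  let restrict (f : ι → Fin m) (j : {j // j ≠ k}) : Fin m := f j
  have hfiber (g) : (s.filter fun f => restrict f = g).card ≤ N := by
    have hagree {f f'} (hf : f ∈ s.filter fun f => restrict f = g)
        (hf' : f' ∈ s.filter fun f => restrict f = g) (j : ι) (hj : j ≠ k) : f j = f' j :=
      congr_fun ((Finset.mem_filter.1 hf).2.trans (Finset.mem_filter.1 hf').2.symm) ⟨j, hj⟩
    rw [← Finset.card_image_of_injOn (f := fun f => (f k : ℕ)) fun f hf f' hf' hff' => funext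
      fun j => if hj : j = k then hj ▸ Fin.ext hff' else hagree hf hf' j hj]
    refine Finset.card_le_of_forall_lt_add ?_
    simp only [Finset.mem_image]
    rintro _ ⟨f', hf', rfl⟩ _ ⟨f, hf, rfl⟩
    exact hs f (Finset.mem_filter.1 hf).1 f' (Finset.mem_filter.1 hf').1 (hagree hf hf')
  calc s.card ≤ N * (Finset.univ : Finset ({j // j ≠ k} → Fin m)).card :=
        Finset.card_le_mul_card_image_of_maps_to (f := restrict) (fun _ _ => Finset.mem_univ _) N
          fun g _ => hfiber g
    _ = N * m ^ (Fintype.card ι - 1) := by simp [Fintype.card_subtype_compl]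

theorem card_filter_uniformGrid_le_of_thin {d m : ℕ} (hm : 2 ≤ m) {A : Set (Fin d → ℝ)}
    [DecidablePred (· ∈ A)] {k : Fin d} {δ : ℝ}
    (hA : ∀ p ∈ A, ∀ p' ∈ A, (∀ j, j ≠ k → p j = p' j) → p k < p' k + δ) :
    ((uniformGrid d m).filter (· ∈ A)).card ≤ ⌈((m : ℝ) - 1) * δ⌉₊ * m ^ (d - 1) := by
  have hm1 : (0 : ℝ) < m - 1 := by
    have : (2 : ℝ) ≤ m := by exact_mod_cast hm
    linarith
  let toPt (f : Fin d → Fin m) (i : Fin d) : ℝ := (f i : ℝ) / (m - 1)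
  have hinj : Injective toPt := fun f g hfg => funext fun i => Fin.ext <| by
    exact_mod_cast (div_left_inj' hm1.ne').1 (congr_fun hfg i)
  rw [uniformGrid, Finset.filter_image, Finset.card_image_of_injective _ hinj]
  simpa using card_le_mul_pow_of_thin k _ fun f hf f' hf' hff' => by
    have hlt := hA _ (Finset.mem_filter.1 hf).2 _ (Finset.mem_filter.1 hf').2
      fun j hj => by simp [hff' j hj]
    rw [div_add' _ _ _ hm1.ne', div_lt_div_iff_of_pos_right hm1] at hlt
    have hceil := Nat.le_ceil (((m : ℝ) - 1) * δ)
    exact_mod_cast (show ((f k : ℕ) : ℝ) < (f' k : ℕ) + ⌈((m : ℝ) - 1) * δ⌉₊ by linarith)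

section main

variable {d : ℕ} {S : Set (Fin d → ℝ)} {δ : ℝ}

theorem StairConvex.volume_le_volume_shrink_add (hS : StairConvex S) (hS1 : S ⊆ Icc 0 1)
    (hδ : 0 ≤ δ) : volume S ≤ volume (shrink S δ) + ENNReal.ofReal (d * δ) :=
  calc volume S
      ≤ volume (shrink S δ) + ∑ k : Fin d, volume (shrinkFrom S δ (k + 1) \ shrinkFrom S δ k) :=
        (measure_mono (subset_shrink_union_iUnion S δ)).trans <|
          (measure_union_le _ _).trans (add_le_add le_rfl (measure_iUnion_fintype_le _ _))
    _ ≤ volume (shrink S δ) + ∑ _k : Fin d, ENNReal.ofReal δ := by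
        gcongr with k
        exact hS.volume_shrinkFrom_diff_le hS1 hδ k
    _ = volume (shrink S δ) + ENNReal.ofReal (d * δ) := by
        simp [ENNReal.ofReal_mul]

theorem StairConvex.card_filter_le_card_filter_shrink_add (hS : StairConvex S) {m : ℕ}
    (hm : 2 ≤ m) [DecidablePred (· ∈ S)] [DecidablePred (· ∈ shrink S δ)] :
    ((uniformGrid d m).filter (· ∈ S)).card ≤
      ((uniformGrid d m).filter (· ∈ shrink S δ)).card +
        d * ⌈((m : ℝ) - 1) * δ⌉₊ * m ^ (d - 1) := by
  classical
  set G := uniformGrid d m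
  set L : Fin d → Set (Fin d → ℝ) := fun k => shrinkFrom S δ (k + 1) \ shrinkFrom S δ k
  calc (G.filter (· ∈ S)).card
      ≤ (G.filter (· ∈ shrink S δ) ∪ Finset.univ.biUnion fun k => G.filter (· ∈ L k)).card :=
        Finset.card_le_card fun p hp => by
          simp only [Finset.mem_filter] at hp
          simpa [hp.1, L] using subset_shrink_union_iUnion S δ hp.2
    _ ≤ (G.filter (· ∈ shrink S δ)).card + ∑ k, (G.filter (· ∈ L k)).card :=
        (Finset.card_union_le _ _).trans (add_le_add le_rfl Finset.card_biUnion_le)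
    _ ≤ (G.filter (· ∈ shrink S δ)).card + ∑ _k : Fin d, ⌈((m : ℝ) - 1) * δ⌉₊ * m ^ (d - 1) := by
        gcongr with k
        exact card_filter_uniformGrid_le_of_thin hm fun _ hp _ hp' hpp' =>
          hS.lt_add_of_mem_shrinkFrom_diff hp' hp.1 fun j hj => (hpp' j hj.ne').symm
    _ = _ := by simp [mul_assoc]

end main

open Classical in
theorem shrink_stairConvex_volume_grid_general (d m : ℕ) (hm : 2 ≤ m)
    (S : Set (Fin d → ℝ)) (hS : S ⊆ Set.Icc 0 1) (hsc : StairConvex S)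
    (δ : ℝ) (hδ : 0 < δ) :
    StairConvex (shrink S δ) ∧
      MeasureTheory.volume S ≤
        MeasureTheory.volume (shrink S δ) + ENNReal.ofReal (d * δ) ∧
      ((uniformGrid d m).filter (fun p => p ∈ S)).card ≤
        ((uniformGrid d m).filter (fun p => p ∈ shrink S δ)).card +
          d * ⌈((m : ℝ) - 1) * δ⌉₊ * m ^ (d - 1) :=
  ⟨shrinkFrom_zero S δ ▸ stairConvex_shrinkFrom hsc δ 0,
    hsc.volume_le_volume_shrink_add hS hδ.le, hsc.card_filter_le_card_filter_shrink_add hm⟩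

open Classical in
/-- The erosion of a stair-convex `S ⊆ [0,1]^d` by `[0,δ]^d` is stair-convex, loses at
most `d·δ` in volume, and at most `d·⌈(m-1)δ⌉·m^(d-1)` points of the uniform grid. -/
theorem shrink_stairConvex_volume_grid (d m : ℕ) (hd : 1 ≤ d) (hm : 2 ≤ m)
    (S : Set (Fin d → ℝ)) (hS : S ⊆ Set.Icc 0 1) (hsc : StairConvex S)
    (δ : ℝ) (hδ : 0 < δ) :
    StairConvex (shrink S δ) ∧
      MeasureTheory.volume S ≤
        MeasureTheory.volume (shrink S δ) + ENNReal.ofReal (d * δ) ∧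
      ((uniformGrid d m).filter (fun p => p ∈ S)).card ≤
        ((uniformGrid d m).filter (fun p => p ∈ shrink S δ)).card +
          d * ⌈((m : ℝ) - 1) * δ⌉₊ * m ^ (d - 1) :=
  shrink_stairConvex_volume_grid_general d m hm S hS hsc δ hδ
end

section
/- Let x ≥ 0 be a real number with α(x) ≥ 4. Then α_{α(x)−3}(x) > A(α(x)−2). -/
/-- The Ackermann hierarchy: `ackH k n = A_{k+1}(n)`, i.e. `A_1(n) = 2n`,
`A_k(0) = 1` and `A_k(n) = A_{k-1}(A_k(n-1))` for `k ≥ 2`, `n ≥ 1`. -/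
def ackH : ℕ → ℕ → ℕ
  | 0, n => 2 * n
  | _ + 1, 0 => 1
  | k + 1, n + 1 => ackH k (ackH (k + 1) n)

/-- The Ackermann function `A(n) = A_n(3)` (for `n ≥ 1`). -/
def ackA (n : ℕ) : ℕ := ackH (n - 1) 3

/-- The inverse functions of the Ackermann hierarchy:
`alphaH k x = min {n : A_k(n) ≥ x}` (for `k ≥ 1`, real `x`). -/
noncomputable def alphaH (k : ℕ) (x : ℝ) : ℕ := sInf {n : ℕ | x ≤ ackH (k - 1) n}

/-- The inverse Ackermann function `α(x) = min {n ≥ 1 : A(n) ≥ x}`. -/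
noncomputable def alphaA (x : ℝ) : ℕ := sInf {n : ℕ | 1 ≤ n ∧ x ≤ ackA n}

/-!
Write `m = α(x)`. Minimality of `m` gives `A(m-1) < x`, and unfolding the recursion twice,
`A(m-1) = A_{m-2}(A_{m-1}(2)) = A_{m-2}(4) = A_{m-3}(A_{m-2}(3)) = A_{m-3}(A(m-2))`,
using `A_k(2) = 4`. So `A_{m-3}(A(m-2)) < x`, and since `A_{m-3}` is monotone, the least `n` with
`A_{m-3}(n) ≥ x` exceeds `A(m-2)`.
-/

theorem ackH_one (k : ℕ) : ackH k 1 = 2 := by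
  induction k with
  | zero => rw [ackH]
  | succ k ih => rw [ackH, ackH, ih]

theorem ackH_two (k : ℕ) : ackH k 2 = 4 := by
  induction k with
  | zero => rw [ackH]
  | succ k ih => rw [ackH, ackH_one, ih]

theorem self_lt_ackH (k : ℕ) {n : ℕ} (hn : 0 < n) : n < ackH k n := by
  induction k generalizing n with
  | zero => rw [ackH]; omega
  | succ k ih =>
    induction n with
    | zero => omega
    | succ n ihn =>
      rcases Nat.eq_zero_or_pos n with rfl | hn
      · rw [ackH_one]; omega
      · rw [ackH]
        calc n + 1 ≤ ackH (k + 1) n := ihn hn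
          _ < ackH k (ackH (k + 1) n) := ih (by omega)

theorem self_le_ackH (k n : ℕ) : n ≤ ackH k n := by
  rcases Nat.eq_zero_or_pos n with rfl | hn
  · exact Nat.zero_le _
  · exact (self_lt_ackH k hn).le

theorem ackH_succ_pos (k n : ℕ) : 0 < ackH (k + 1) n := by
  induction n with
  | zero => rw [ackH]; omega
  | succ n ih => rw [ackH]; exact ih.trans (self_lt_ackH k ih)

theorem ackH_strictMono (k : ℕ) : StrictMono (ackH k) := by
  refine strictMono_nat_of_lt_succ fun n => ?_
  cases k with
  | zero => rw [ackH, ackH]; omega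
  | succ k => rw [ackH]; exact self_lt_ackH k (ackH_succ_pos k n)

/-- `A(n+1) = A_{n-1}(A(n))`. -/
theorem ackA_succ {n : ℕ} (hn : 2 ≤ n) : ackA (n + 1) = ackH (n - 2) (ackA n) := by
  obtain ⟨k, rfl⟩ : ∃ k, n = k + 2 := ⟨n - 2, by omega⟩
  calc ackA (k + 2 + 1) = ackH (k + 1) (ackH (k + 2) 2) := by rw [ackA, Nat.add_sub_cancel, ackH]
    _ = ackH (k + 1) 4 := by rw [ackH_two]
    _ = ackH k (ackH (k + 1) 3) := by rw [ackH]

theorem lt_alphaH_of_ackH_lt {k n : ℕ} {x : ℝ} (h : (ackH (k - 1) n : ℝ) < x) :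
    n < alphaH k x := by
  have hne : {n : ℕ | x ≤ ackH (k - 1) n}.Nonempty :=
    ⟨⌈x⌉₊, (Nat.le_ceil x).trans (by exact_mod_cast self_le_ackH (k - 1) ⌈x⌉₊)⟩
  have hmem : x ≤ ackH (k - 1) (alphaH k x) := Nat.sInf_mem hne
  by_contra! hle
  have : (ackH (k - 1) (alphaH k x) : ℝ) ≤ ackH (k - 1) n := by
    exact_mod_cast (ackH_strictMono (k - 1)).monotone hle
  linarith

theorem ackA_lt_of_lt_alphaA {n : ℕ} {x : ℝ} (hn : 1 ≤ n) (h : n < alphaA x) :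
    (ackA n : ℝ) < x := by
  have hnot : ¬(1 ≤ n ∧ x ≤ ackA n) := Nat.notMem_of_lt_sInf h
  exact not_le.mp fun hx => hnot ⟨hn, hx⟩

theorem alpha_sub_three_gt_ack_general (x : ℝ) (h : 4 ≤ alphaA x) :
    ackA (alphaA x - 2) < alphaH (alphaA x - 3) x := by
  have hA : (ackA (alphaA x - 2 + 1) : ℝ) < x := ackA_lt_of_lt_alphaA (by omega) (by omega)
  rw [ackA_succ (by omega)] at hA
  apply lt_alphaH_of_ackH_lt
  rwa [show alphaA x - 3 - 1 = alphaA x - 2 - 2 by omega]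

/-- For `x` with `α(x) ≥ 4` one has `α_{α(x)-3}(x) > A(α(x)-2)`. -/
theorem alpha_sub_three_gt_ack (x : ℝ) (hx : 0 ≤ x) (h : 4 ≤ alphaA x) :
    ackA (alphaA x - 2) < alphaH (alphaA x - 3) x :=
  alpha_sub_three_gt_ack_general x h
end
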